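/- If μ = √6/9 then for the function ψ(m) = (3m² + 1)²/(3(4m³ + μ)) on (0,∞), the infimum equals 1/(3μ), i.e. ψ(m) ≥ 1/(3μ) for all m > 0 with equality attained at the largest positive root of m³ − m + μ = 0, and lim_{m→0⁺} ψ(m) = 1/(3μ). -/

import Mathlib

/-!
When `27 μ² = 2` one has the identity `ψ(m) - 1/(3μ) = 3 m² (m - 3μ)² / (4 m³ + μ)`, so `ψ ≥ 1/(3μ)`
on `m ≥ 0`, with equality at `m = 0` and at `m = 3μ = √6/3`. The point `3μ` is a root of the cubic, and
`m³ - m + μ = (m - 3μ)(m² + 3μm + 9μ² - 1)` where the second factor exceeds `27μ² - 1 = 1` for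
`m > 3μ > 0`, so `3μ` is the largest root. The limit at `0⁺` is continuity of `ψ` at `0`.
-/

open Filter Topology

noncomputable def psi (μ m : ℝ) : ℝ := (3 * m ^ 2 + 1) ^ 2 / (3 * (4 * m ^ 3 + μ))

theorem tendsto_psi_nhdsGT_zero {μ : ℝ} (hμ : μ ≠ 0) :
    Tendsto (psi μ) (𝓝[>] 0) (𝓝 (1 / (3 * μ))) := by
  have hcont : ContinuousAt (psi μ) 0 :=
    ContinuousAt.div (by fun_prop) (by fun_prop) (by simpa using hμ)
  have hzero : psi μ 0 = 1 / (3 * μ) := by simp [psi]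
  exact hzero ▸ hcont.tendsto.mono_left nhdsWithin_le_nhds

section CriticalMu

variable {μ : ℝ} (hμ : 27 * μ ^ 2 = 2)
include hμ

theorem psi_sub_inv_three_mul {m : ℝ} (hden : 4 * m ^ 3 + μ ≠ 0) :
    psi μ m - 1 / (3 * μ) = 3 * m ^ 2 * (m - 3 * μ) ^ 2 / (4 * m ^ 3 + μ) := by
  have hμ0 : μ ≠ 0 := by rintro rfl; norm_num at hμ
  rw [psi, div_sub_div _ _ (by positivity) (by positivity), div_eq_div_iff (by positivity) hden]
  linear_combination (4 * m ^ 3 + μ) * (6 * m ^ 3 - 9 * μ * m ^ 2) * hμ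

theorem inv_three_mul_le_psi (hμpos : 0 < μ) {m : ℝ} (hm : 0 ≤ m) :
    1 / (3 * μ) ≤ psi μ m := by
  have hden : 0 < 4 * m ^ 3 + μ := by positivity
  have hgap := psi_sub_inv_three_mul hμ hden.ne'
  have : 0 ≤ 3 * m ^ 2 * (m - 3 * μ) ^ 2 / (4 * m ^ 3 + μ) := by positivity
  linarith

theorem psi_three_mul : psi μ (3 * μ) = 1 / (3 * μ) := by
  have hden : 4 * (3 * μ) ^ 3 + μ ≠ 0 := by
    have : 4 * (3 * μ) ^ 3 + μ = 9 * μ := by linear_combination 4 * μ * hμ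
    rw [this]; rintro h; norm_num [show μ = 0 by linarith] at hμ
  have hgap := psi_sub_inv_three_mul hμ hden
  rw [sub_self, zero_pow two_ne_zero, mul_zero, zero_div] at hgap
  linarith

theorem cubic_eq_mul (m : ℝ) :
    m ^ 3 - m + μ = (m - 3 * μ) * (m ^ 2 + 3 * μ * m + 9 * μ ^ 2 - 1) := by
  linear_combination μ * hμ

theorem cubic_three_mul_eq_zero : (3 * μ) ^ 3 - 3 * μ + μ = 0 := by
  rw [cubic_eq_mul hμ, sub_self, zero_mul]

theorem le_three_mul_of_cubic_eq_zero (hμpos : 0 < μ) {m : ℝ} (hroot : m ^ 3 - m + μ = 0) :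
    m ≤ 3 * μ := by
  by_contra! hlt
  have hfactor : 0 < m ^ 2 + 3 * μ * m + 9 * μ ^ 2 - 1 := by nlinarith
  have : 0 < m ^ 3 - m + μ := by
    rw [cubic_eq_mul hμ]; exact mul_pos (by linarith) hfactor
  linarith

end CriticalMu

theorem psi_inf_at_critical_mu (μ : ℝ) (hμ : μ = Real.sqrt 6 / 9)
    (ψ : ℝ → ℝ) (hψ : ∀ m, ψ m = (3 * m ^ 2 + 1) ^ 2 / (3 * (4 * m ^ 3 + μ))) :
    (∀ m : ℝ, 0 < m → ψ m ≥ 1 / (3 * μ)) ∧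
    (∃ m₀ : ℝ, 0 < m₀ ∧ m₀ ^ 3 - m₀ + μ = 0 ∧
      (∀ m : ℝ, 0 < m → m ^ 3 - m + μ = 0 → m ≤ m₀) ∧
      ψ m₀ = 1 / (3 * μ)) ∧
    Filter.Tendsto ψ (nhdsWithin 0 (Set.Ioi 0)) (nhds (1 / (3 * μ))) := by
  obtain rfl : ψ = psi μ := funext hψ
  have hμpos : 0 < μ := by rw [hμ]; positivity
  have hcrit : 27 * μ ^ 2 = 2 := by
    rw [hμ, div_pow, Real.sq_sqrt (by norm_num)]; norm_num
  refine ⟨fun m hm => inv_three_mul_le_psi hcrit hμpos hm.le,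
    ⟨3 * μ, by positivity, cubic_three_mul_eq_zero hcrit,
      fun m _ hroot => le_three_mul_of_cubic_eq_zero hcrit hμpos hroot, psi_three_mul hcrit⟩,
    tendsto_psi_nhdsGT_zero hμpos.ne'⟩
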